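/- Let p ∈ ℕ with p ≥ 1 and let λ ≥ 0 be a real number with λ ≠ k(k+1) for every k ∈ ℕ (equivalently, λ = ν(ν+1) with ν ≥ 0 and ν ∉ ℤ). Then every twice-differentiable solution a : (−1,1) → ℝ of the master ODE (1−τ²)·a″(τ) + 2(p−1)·τ·a′(τ) + (λ − p(p−1))·a(τ) = 0 has well-defined finite limits as τ → 1⁻ and as τ → −1⁺. -/

import Mathlib

/-!
For a solution `a` of `(1 - τ²) a'' + 2κτ a' + μ a = 0`, the energy `E = a² + (1 - τ²) a'²`
satisfies `E' = 2(1 - μ) a a' - 2(1 + 2κ) τ a'²`. For `τ ≥ 0` and `1 + 2κ ≥ 0` this gives, by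
AM–GM, `E' ≤ |1 - μ| E / √(1 - τ²)`, and `1 / √(1 - τ²)` is integrable up to `1` (its primitive
is `arcsin`), so Gronwall bounds `E` on `[0, 1)`. Then `a` is bounded and `a' ≤ K / √(1 - τ²)`,
so `a - K arcsin` is antitone and bounded below and has a limit at `1⁻`. The reflection
`τ ↦ -τ` preserves the equation and gives the limit at `-1⁺`.
-/

open Set Filter Topology Real

theorem le_mul_exp_sub_of_hasDerivAt {E E' Φ φ : ℝ → ℝ} {c d x : ℝ}
    (hE : ∀ y ∈ Ico c d, HasDerivAt E (E' y) y) (hΦ : ∀ y ∈ Ico c d, HasDerivAt Φ (φ y) y)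
    (hle : ∀ y ∈ Ioo c d, E' y ≤ φ y * E y) (hx : x ∈ Ico c d) :
    E x ≤ E c * exp (Φ x - Φ c) := by
  have hD : ∀ y ∈ Ico c d, HasDerivAt (fun y => E y * exp (-Φ y))
      (exp (-Φ y) * (E' y - φ y * E y)) y := by
    intro y hy
    exact ((hE y hy).mul (hΦ y hy).neg.exp).congr_deriv (by simp only [Pi.neg_apply]; ring)
  have hanti : AntitoneOn (fun y => E y * exp (-Φ y)) (Ico c d) := by
    apply antitoneOn_of_deriv_nonpos (convex_Ico c d)
    · exact fun y hy => (hD y hy).continuousAt.continuousWithinAt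
    · rw [interior_Ico]
      exact fun y hy => (hD y (Ioo_subset_Ico_self hy)).differentiableAt.differentiableWithinAt
    · rw [interior_Ico]
      intro y hy
      rw [(hD y (Ioo_subset_Ico_self hy)).deriv]
      exact mul_nonpos_of_nonneg_of_nonpos (exp_pos _).le (sub_nonpos.2 (hle y hy))
  have hDx : E x * exp (-Φ x) ≤ E c * exp (-Φ c) :=
    hanti (left_mem_Ico.2 (hx.1.trans_lt hx.2)) hx hx.1
  calc E x = E x * exp (-Φ x) * exp (Φ x) := by
        rw [mul_assoc, ← exp_add, neg_add_cancel, exp_zero, mul_one]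
    _ ≤ E c * exp (-Φ c) * exp (Φ x) := mul_le_mul_of_nonneg_right hDx (exp_pos _).le
    _ = E c * exp (Φ x - Φ c) := by rw [mul_assoc, ← exp_add, neg_add_eq_sub]

theorem exists_tendsto_nhdsLT_of_deriv_le {f g f' g' : ℝ → ℝ} {c d l : ℝ} (hcd : c < d)
    (hf : ∀ x ∈ Ioo c d, HasDerivAt f (f' x) x) (hg : ∀ x ∈ Ioo c d, HasDerivAt g (g' x) x)
    (hle : ∀ x ∈ Ioo c d, f' x ≤ g' x) (hf_bdd : BddBelow (f '' Ioo c d))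
    (hg_bdd : BddAbove (g '' Ioo c d)) (hg_lim : Tendsto g (𝓝[<] d) (𝓝 l)) :
    ∃ L, Tendsto f (𝓝[<] d) (𝓝 L) := by
  have hfg : ∀ x ∈ Ioo c d, HasDerivAt (f - g) (f' x - g' x) x :=
    fun x hx => (hf x hx).sub (hg x hx)
  have hanti : AntitoneOn (f - g) (Ioo c d) := by
    apply antitoneOn_of_deriv_nonpos (convex_Ioo c d)
    · exact fun x hx => (hfg x hx).continuousAt.continuousWithinAt
    · rw [interior_Ioo]
      exact fun x hx => (hfg x hx).differentiableAt.differentiableWithinAt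
    · rw [interior_Ioo]
      intro x hx
      rw [(hfg x hx).deriv]
      exact sub_nonpos.2 (hle x hx)
  obtain ⟨m, hm⟩ := hf_bdd
  obtain ⟨M, hM⟩ := hg_bdd
  have hbdd : BddBelow ((f - g) '' Ioo c d) := by
    refine ⟨m - M, ?_⟩
    rintro _ ⟨x, hx, rfl⟩
    exact sub_le_sub (hm ⟨x, hx, rfl⟩) (hM ⟨x, hx, rfl⟩)
  exact ⟨_, by simpa using (hanti.tendsto_nhdsWithin_Ioo_left (nonempty_Ioo.2 hcd) hbdd).add hg_lim⟩

theorem two_mul_abs_mul_le_div {x y s : ℝ} (hs : 0 < s) :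
    2 * |x * y| ≤ (x ^ 2 + s ^ 2 * y ^ 2) / s := by
  rw [le_div_iff₀ hs, abs_mul]
  nlinarith [two_mul_le_add_sq |x| (s * |y|), sq_abs x, sq_abs y]

namespace MasterODE

/-- The master ODE with `κ = p - 1` and `μ = λ - p(p - 1)`. -/
def IsSolution (κ μ : ℝ) (a : ℝ → ℝ) : Prop :=
  ∀ τ ∈ Ioo (-1 : ℝ) 1, DifferentiableAt ℝ a τ ∧ DifferentiableAt ℝ (deriv a) τ ∧
    (1 - τ ^ 2) * deriv (deriv a) τ + 2 * κ * τ * deriv a τ + μ * a τ = 0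

noncomputable def energy (a : ℝ → ℝ) (τ : ℝ) : ℝ := a τ ^ 2 + (1 - τ ^ 2) * deriv a τ ^ 2

noncomputable def energyDeriv (κ μ : ℝ) (a : ℝ → ℝ) (τ : ℝ) : ℝ :=
  2 * (1 - μ) * a τ * deriv a τ - 2 * (1 + 2 * κ) * τ * deriv a τ ^ 2

variable {κ μ : ℝ} {a : ℝ → ℝ}

theorem energyDeriv_le (hκ : 0 ≤ 1 + 2 * κ) {τ : ℝ} (hτ : τ ∈ Ico (0 : ℝ) 1) :
    energyDeriv κ μ a τ ≤ |1 - μ| * (1 / √(1 - τ ^ 2)) * energy a τ := by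
  have hs : 0 < √(1 - τ ^ 2) := sqrt_pos.2 (by nlinarith [hτ.1, hτ.2])
  have hamgm := two_mul_abs_mul_le_div (x := a τ) (y := deriv a τ) hs
  rw [sq_sqrt (by nlinarith [hτ.1, hτ.2])] at hamgm
  have hdamp : 0 ≤ 2 * (1 + 2 * κ) * τ * deriv a τ ^ 2 := by
    have := hτ.1
    positivity
  calc energyDeriv κ μ a τ ≤ |1 - μ| * (2 * |a τ * deriv a τ|) := by
        have hcross : (1 - μ) * (a τ * deriv a τ) ≤ |1 - μ| * |a τ * deriv a τ| :=
          (le_abs_self _).trans (abs_mul _ _).le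
        unfold energyDeriv
        linarith
    _ ≤ |1 - μ| * (energy a τ / √(1 - τ ^ 2)) :=
        mul_le_mul_of_nonneg_left hamgm (abs_nonneg _)
    _ = |1 - μ| * (1 / √(1 - τ ^ 2)) * energy a τ := by ring

namespace IsSolution

theorem hasDerivAt_energy (h : IsSolution κ μ a) {τ : ℝ} (hτ : τ ∈ Ioo (-1 : ℝ) 1) :
    HasDerivAt (energy a) (energyDeriv κ μ a τ) τ := by
  obtain ⟨ha, hb, hode⟩ := h τ hτ
  have := (ha.hasDerivAt.fun_pow 2).add
    ((((hasDerivAt_id τ).fun_pow 2).const_sub 1).mul (hb.hasDerivAt.fun_pow 2))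
  exact this.congr_deriv (by
    simp only [energyDeriv, id, Nat.cast_ofNat]
    linear_combination (2 * deriv a τ) * hode)

theorem energy_le (h : IsSolution κ μ a) (hκ : 0 ≤ 1 + 2 * κ) {τ : ℝ}
    (hτ : τ ∈ Ico (0 : ℝ) 1) :
    energy a τ ≤ energy a 0 * exp (|1 - μ| * (π / 2)) := by
  have hIoo : ∀ y ∈ Ico (0 : ℝ) 1, y ∈ Ioo (-1 : ℝ) 1 :=
    fun y hy => ⟨by linarith [hy.1], hy.2⟩
  have hgron := le_mul_exp_sub_of_hasDerivAt (Φ := fun y => |1 - μ| * arcsin y)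
    (fun y hy => h.hasDerivAt_energy (hIoo y hy))
    (fun y hy => (hasDerivAt_arcsin (by linarith [hy.1]) hy.2.ne).const_mul _)
    (fun y hy => energyDeriv_le hκ (Ioo_subset_Ico_self hy)) hτ
  have hE0 : 0 ≤ energy a 0 := by simp only [energy]; positivity
  refine hgron.trans (mul_le_mul_of_nonneg_left (exp_le_exp.2 ?_) hE0)
  simp only [arcsin_zero, mul_zero, sub_zero]
  exact mul_le_mul_of_nonneg_left (arcsin_le_pi_div_two τ) (abs_nonneg _)

theorem exists_tendsto_nhdsLT_one (h : IsSolution κ μ a) (hκ : 0 ≤ 1 + 2 * κ) :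
    ∃ L, Tendsto a (𝓝[<] 1) (𝓝 L) := by
  obtain ⟨M, hM⟩ : ∃ M, ∀ τ ∈ Ico (0 : ℝ) 1, energy a τ ≤ M := ⟨_, fun τ => h.energy_le hκ⟩
  set K := √M
  have hK : 0 ≤ K := sqrt_nonneg _
  have hbound : ∀ τ ∈ Ioo (0 : ℝ) 1,
      |a τ| ≤ K ∧ |√(1 - τ ^ 2) * deriv a τ| ≤ K := by
    intro τ hτ
    have hE := hM τ (Ioo_subset_Ico_self hτ)
    have h1 : 0 ≤ 1 - τ ^ 2 := by nlinarith [hτ.1, hτ.2]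
    have h2 := mul_nonneg h1 (sq_nonneg (deriv a τ))
    refine ⟨abs_le_sqrt ?_, abs_le_sqrt ?_⟩
    · simp only [energy] at hE; linarith
    · rw [mul_pow, sq_sqrt h1]; simp only [energy] at hE; nlinarith [sq_nonneg (a τ)]
  refine exists_tendsto_nhdsLT_of_deriv_le (g := fun τ => K * arcsin τ) zero_lt_one
    (fun τ hτ => (h τ ⟨by linarith [hτ.1], hτ.2⟩).1.hasDerivAt)
    (fun τ hτ => (hasDerivAt_arcsin (by linarith [hτ.1]) hτ.2.ne).const_mul K) ?_ ?_ ?_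
    ((continuous_arcsin.const_mul K).continuousWithinAt.tendsto)
  · intro τ hτ
    have hs : 0 < √(1 - τ ^ 2) := sqrt_pos.2 (by nlinarith [hτ.1, hτ.2])
    rw [mul_one_div, le_div_iff₀ hs, mul_comm]
    exact (le_abs_self _).trans (hbound τ hτ).2
  · exact ⟨-K, by rintro _ ⟨τ, hτ, rfl⟩; exact neg_le_of_abs_le (hbound τ hτ).1⟩
  · exact ⟨K * (π / 2), by
      rintro _ ⟨τ, -, rfl⟩; exact mul_le_mul_of_nonneg_left (arcsin_le_pi_div_two τ) hK⟩

theorem comp_neg (h : IsSolution κ μ a) : IsSolution κ μ (fun τ => a (-τ)) := by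
  intro τ hτ
  have hτ' : -τ ∈ Ioo (-1 : ℝ) 1 := ⟨by linarith [hτ.2], by linarith [hτ.1]⟩
  obtain ⟨ha, hb, hode⟩ := h (-τ) hτ'
  have hderiv : deriv (fun x => a (-x)) = fun x => -deriv a (-x) := funext (deriv_comp_neg a)
  have hderiv2 : deriv (deriv fun x => a (-x)) τ = deriv (deriv a) (-τ) := by
    rw [hderiv, deriv.fun_neg, deriv_comp_neg, neg_neg]
  refine ⟨differentiableAt_comp_neg.2 ha, ?_, ?_⟩
  · rw [hderiv]; exact (differentiableAt_comp_neg.2 hb).neg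
  · rw [hderiv2, hderiv]
    linear_combination hode

theorem exists_tendsto_nhdsGT_neg_one (h : IsSolution κ μ a) (hκ : 0 ≤ 1 + 2 * κ) :
    ∃ L, Tendsto a (𝓝[>] (-1)) (𝓝 L) := by
  obtain ⟨L, hL⟩ := h.comp_neg.exists_tendsto_nhdsLT_one hκ
  exact ⟨L, by simpa [Function.comp_def] using hL.comp tendsto_neg_nhdsGT_neg⟩

end IsSolution

end MasterODE

theorem stmt_14 (p : ℕ) (hp : 1 ≤ p) (lam : ℝ) (a : ℝ → ℝ)
    (hdiff : ∀ τ ∈ Set.Ioo (-1 : ℝ) 1,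
      DifferentiableAt ℝ a τ ∧ DifferentiableAt ℝ (deriv a) τ)
    (hode : ∀ τ ∈ Set.Ioo (-1 : ℝ) 1,
      (1 - τ ^ 2) * deriv (deriv a) τ + 2 * ((p : ℝ) - 1) * τ * deriv a τ
        + (lam - (p : ℝ) * ((p : ℝ) - 1)) * a τ = 0) :
    (∃ L : ℝ, Filter.Tendsto a (nhdsWithin 1 (Set.Ioo (-1 : ℝ) 1)) (nhds L)) ∧
    (∃ L : ℝ, Filter.Tendsto a (nhdsWithin (-1) (Set.Ioo (-1 : ℝ) 1)) (nhds L)) := by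
  have h : MasterODE.IsSolution ((p : ℝ) - 1) (lam - p * (p - 1)) a :=
    fun τ hτ => ⟨(hdiff τ hτ).1, (hdiff τ hτ).2, hode τ hτ⟩
  have hκ : 0 ≤ 1 + 2 * ((p : ℝ) - 1) := by
    have : (1 : ℝ) ≤ p := by exact_mod_cast hp
    linarith
  obtain ⟨L₁, h₁⟩ := h.exists_tendsto_nhdsLT_one hκ
  obtain ⟨L₂, h₂⟩ := h.exists_tendsto_nhdsGT_neg_one hκ
  exact ⟨⟨L₁, h₁.mono_left (nhdsWithin_mono _ Ioo_subset_Iio_self)⟩,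
    ⟨L₂, h₂.mono_left (nhdsWithin_mono _ Ioo_subset_Ioi_self)⟩⟩
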